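/- Let (𝔼_{s,t}) be a family of operators 𝔼_{s,t}: L²(ℱ_t) → L²(ℱ_s) satisfying (A4): 1_A·𝔼_{s,t}[X] = 1_A·𝔼_{s,t}[1_A·X] a.s. for all A ∈ ℱ_s, and the normalization (A4₀): 𝔼_{s,t}[0] = 0 a.s. Then the family satisfies (A4'): 1_A·𝔼_{s,t}[X] = 𝔼_{s,t}[1_A·X] a.s. for all A ∈ ℱ_s. Conversely, (A4') implies both (A4) and (A4₀). -/

import Mathlib

/-!
Split every function along `A` and `Aᶜ`. On `A`, (A4) already says `1_A 𝔼[X] = 𝔼[1_A X]`. On `Aᶜ`,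
(A4) for the set `Aᶜ` and the variable `1_A X` gives `1_{Aᶜ} 𝔼[1_A X] = 1_{Aᶜ} 𝔼[0]`, which vanishes
by (A4₀). Conversely (A4') yields (A4) because `1_A (1_A X) = 1_A X`, and (A4₀) is (A4') for `A = ∅`.
-/

open MeasureTheory Set

namespace Filter.EventuallyEq

variable {Ω β : Type*} [Zero β] {l : Filter Ω} {A : Set Ω} {f g : Ω → β}

theorem of_indicator_of_indicator_compl (h : A.indicator f =ᶠ[l] A.indicator g)
    (hc : Aᶜ.indicator f =ᶠ[l] Aᶜ.indicator g) : f =ᶠ[l] g := by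
  filter_upwards [h, hc] with ω h hc
  by_cases hω : ω ∈ A
  · simpa [hω] using h
  · simpa [hω] using hc

end Filter.EventuallyEq

section LocalOperator

variable {Ω β : Type*} [Zero β] {l : Filter Ω} (T : (Ω → β) → Ω → β) {A : Set Ω} {X : Ω → β}

theorem indicator_op_eventuallyEq_op_indicator
    (hA : A.indicator (T X) =ᶠ[l] A.indicator (T (A.indicator X)))
    (hAc : Aᶜ.indicator (T (A.indicator X)) =ᶠ[l] Aᶜ.indicator (T (Aᶜ.indicator (A.indicator X))))
    (h0 : T 0 =ᶠ[l] 0) :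
    A.indicator (T X) =ᶠ[l] T (A.indicator X) := by
  refine .of_indicator_of_indicator_compl (A := A) ?_ ?_
  · rwa [indicator_indicator, inter_self]
  · have hzero : Aᶜ.indicator (A.indicator X) = 0 := by
      rw [indicator_indicator, compl_inter_self, indicator_empty]; rfl
    rw [hzero] at hAc
    filter_upwards [hAc, h0] with ω hAc h0
    rw [hAc, indicator_indicator, compl_inter_self, indicator_empty]
    by_cases hω : ω ∈ Aᶜ <;> simp [hω, h0]

theorem indicator_op_eventuallyEq_indicator_op_indicator
    (hX : A.indicator (T X) =ᶠ[l] T (A.indicator X))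
    (hAX : A.indicator (T (A.indicator X)) =ᶠ[l] T (A.indicator (A.indicator X))) :
    A.indicator (T X) =ᶠ[l] A.indicator (T (A.indicator X)) := by
  rw [indicator_indicator, inter_self] at hAX
  exact hX.trans hAX.symm

end LocalOperator

theorem stmt0_general {Ω : Type*} {mΩ : MeasurableSpace Ω} (P : Measure Ω)
    (ℱ : Filtration ℝ mΩ)
    (E : ℝ → ℝ → (Ω → ℝ) → Ω → ℝ) :
    ((∀ s t : ℝ, 0 ≤ s → s ≤ t → ∀ X : Ω → ℝ, MemLp X 2 P → StronglyMeasurable[ℱ t] X →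
        ∀ A : Set Ω, MeasurableSet[ℱ s] A →
          A.indicator (E s t X) =ᵐ[P] A.indicator (E s t (A.indicator X))) ∧
      (∀ s t : ℝ, 0 ≤ s → s ≤ t →
        E s t (fun _ => (0 : ℝ)) =ᵐ[P] fun _ => (0 : ℝ)))
    ↔ (∀ s t : ℝ, 0 ≤ s → s ≤ t → ∀ X : Ω → ℝ, MemLp X 2 P → StronglyMeasurable[ℱ t] X →
        ∀ A : Set Ω, MeasurableSet[ℱ s] A →
          A.indicator (E s t X) =ᵐ[P] E s t (A.indicator X)) := by
  constructor
  · rintro ⟨hloc, hzero⟩ s t hs hst X hX hXm A hA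
    have hAt : MeasurableSet[ℱ t] A := ℱ.mono hst _ hA
    exact indicator_op_eventuallyEq_op_indicator _ (hloc s t hs hst X hX hXm A hA)
      (hloc s t hs hst _ (hX.indicator (ℱ.le t _ hAt)) (hXm.indicator hAt) Aᶜ hA.compl)
      (hzero s t hs hst)
  · intro h
    refine ⟨fun s t hs hst X hX hXm A hA => ?_, fun s t hs hst => ?_⟩
    · have hAt : MeasurableSet[ℱ t] A := ℱ.mono hst _ hA
      exact indicator_op_eventuallyEq_indicator_op_indicator _ (h s t hs hst X hX hXm A hA)
        (h s t hs hst _ (hX.indicator (ℱ.le t _ hAt)) (hXm.indicator hAt) A hA)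
    · have h_empty := h s t hs hst (fun _ => 0) MemLp.zero stronglyMeasurable_const ∅
        (@MeasurableSet.empty _ (ℱ s))
      rw [indicator_empty, indicator_empty] at h_empty
      exact h_empty.symm

/-- (A4) together with the normalization (A4₀) is equivalent to (A4'). -/
theorem stmt0 {Ω : Type*} {mΩ : MeasurableSpace Ω} (P : Measure Ω) [IsProbabilityMeasure P]
    (ℱ : Filtration ℝ mΩ)
    (E : ℝ → ℝ → (Ω → ℝ) → Ω → ℝ) :
    ((∀ s t : ℝ, 0 ≤ s → s ≤ t → ∀ X : Ω → ℝ, MemLp X 2 P → StronglyMeasurable[ℱ t] X →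
        ∀ A : Set Ω, MeasurableSet[ℱ s] A →
          A.indicator (E s t X) =ᵐ[P] A.indicator (E s t (A.indicator X))) ∧
      (∀ s t : ℝ, 0 ≤ s → s ≤ t →
        E s t (fun _ => (0 : ℝ)) =ᵐ[P] fun _ => (0 : ℝ)))
    ↔ (∀ s t : ℝ, 0 ≤ s → s ≤ t → ∀ X : Ω → ℝ, MemLp X 2 P → StronglyMeasurable[ℱ t] X →
        ∀ A : Set Ω, MeasurableSet[ℱ s] A →
          A.indicator (E s t X) =ᵐ[P] E s t (A.indicator X)) :=
  stmt0_general P ℱ E
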